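/- (Non-degeneracy of corrected coordinates, lower bound) Let φ : B_r → ℝ^d be such that δ := sup over the relevant scales of (1/s²)⨍_{B_s}|φ − ⨍_{B_s}φ|² satisfies δ ≤ δ₀(d) small, and let ξ ∈ ℝ^d. Then ⨍_{B_r} |ξ + ∇φ_ξ|² ≥ (1 − C(d) δ^{1/4}) |ξ|², where φ_ξ := Σ_i ξ_i φ_i. -/

import Mathlib

/-!
Write `ψ = φ_ξ`, `e = ξ / |ξ|` and `t = r u`. For `x ∈ B_{r-t}` the fundamental theorem of calculus
along the segment `[x, x + t e]` gives `t |ξ| + ψ(x + t e) - ψ(x) = ∫₀ᵗ ⟪e, ξ + ∇ψ(x + σ e)⟫ dσ`;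
by Cauchy–Schwarz its square is at most `t ∫₀ᵗ |ξ + ∇ψ(x + σ e)|² dσ`, and integrating over
`B_{r-t}` and translating bounds the total by `t² ∫_{B_r} |ξ + ∇ψ|²`. From below the square is at
least `t² |ξ|² + 2 t |ξ| (ψ(x + t e) - ψ(x))`, and the increments integrate to at least
`-2 ∫_{B_r} |ψ - c|`, which the oscillation bound makes `O(r |ξ| δ^{1/2} |B_r|)`. Since
`|B_{r-t}| ≥ (1 - d u) |B_r|`, this yields `(1 - d u - 4 δ^{1/2} / u) |ξ|² ≤ ⨍_{B_r} |ξ + ∇ψ|²`,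
and the boundary-layer width `u = δ^{1/4}` balances the two error terms.
-/

open MeasureTheory Metric Set Module
open scoped RealInnerProductSpace

theorem sq_setAverage_le_setAverage_sq {α : Type*} [MeasurableSpace α] {μ : Measure α}
    {s : Set α} (hs : μ s ≠ ⊤) {f : α → ℝ} (hf : IntegrableOn f s μ)
    (hf2 : IntegrableOn (fun x => f x ^ 2) s μ) :
    (⨍ x in s, f x ∂μ) ^ 2 ≤ ⨍ x in s, f x ^ 2 ∂μ := by
  rcases eq_or_ne (μ s) 0 with h0 | h0
  · simp [setAverage_eq, measureReal_def, h0]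
  · exact even_two.convexOn_pow.map_set_average_le (continuous_pow 2).continuousOn
      isClosed_univ h0 hs (by simp) hf hf2

theorem sq_setIntegral_le_measureReal_mul_setIntegral_sq {α : Type*} [MeasurableSpace α]
    {μ : Measure α} {s : Set α} (hs : μ s ≠ ⊤) {f : α → ℝ} (hf : IntegrableOn f s μ)
    (hf2 : IntegrableOn (fun x => f x ^ 2) s μ) :
    (∫ x in s, f x ∂μ) ^ 2 ≤ μ.real s * ∫ x in s, f x ^ 2 ∂μ := by
  rw [← measure_smul_setAverage _ hs, ← measure_smul_setAverage _ hs, smul_eq_mul, smul_eq_mul]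
  calc (μ.real s * ⨍ x in s, f x ∂μ) ^ 2 = μ.real s * (μ.real s * (⨍ x in s, f x ∂μ) ^ 2) := by
        ring
    _ ≤ μ.real s * (μ.real s * ⨍ x in s, f x ^ 2 ∂μ) := by
        gcongr
        exact sq_setAverage_le_setAverage_sq hs hf hf2

section Translation

variable {G : Type*} [NormedAddCommGroup G] [MeasurableSpace G] [BorelSpace G]
  (μ : Measure G) [μ.IsAddRightInvariant]

theorem setIntegral_ball_comp_add_right_le {f : G → ℝ} (hf0 : 0 ≤ f)
    {s r : ℝ} (hf : IntegrableOn f (ball 0 r) μ) {a : G} (h : s + ‖a‖ ≤ r) :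
    ∫ x in ball 0 s, f (x + a) ∂μ ≤ ∫ x in ball 0 r, f x ∂μ := by
  have hpre : ball (0 : G) s = (· + a) ⁻¹' ball a s := by simp
  rw [hpre, (measurePreserving_add_right μ a).setIntegral_preimage_emb
    (measurableEmbedding_addRight a)]
  refine setIntegral_mono_set hf (ae_of_all _ fun x => hf0 x) (ball_subset_ball' ?_).eventuallyLE
  simpa using h

theorem abs_setIntegral_ball_comp_add_right_le {f : G → ℝ}
    {s r : ℝ} (hf : IntegrableOn f (ball 0 r) μ) {a : G} (h : s + ‖a‖ ≤ r) :
    |∫ x in ball 0 s, f (x + a) ∂μ| ≤ ∫ x in ball 0 r, |f x| ∂μ :=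
  (abs_integral_le_integral_abs).trans
    (setIntegral_ball_comp_add_right_le μ (fun x => abs_nonneg (f x)) hf.abs h)

end Translation

section Segment

variable {E : Type*} [NormedAddCommGroup E] [InnerProductSpace ℝ E] [CompleteSpace E]

theorem ContDiff.continuous_gradient {ψ : E → ℝ} (hψ : ContDiff ℝ 1 ψ) :
    Continuous (gradient ψ) :=
  (InnerProductSpace.toDual ℝ E).symm.continuous.comp (hψ.continuous_fderiv one_ne_zero)

theorem hasDerivAt_comp_add_smul {ψ : E → ℝ} (hψ : Differentiable ℝ ψ) (x e : E) (σ : ℝ) :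
    HasDerivAt (fun σ : ℝ => ψ (x + σ • e)) ⟪gradient ψ (x + σ • e), e⟫ σ := by
  have hline : HasDerivAt (fun σ : ℝ => x + σ • e) e σ := by
    simpa using ((hasDerivAt_id σ).smul_const e).const_add x
  exact (hψ _).hasGradientAt.hasFDerivAt.comp_hasDerivAt σ hline

theorem sq_add_sub_le_mul_setIntegral_norm_sq {ψ : E → ℝ} (hψ : ContDiff ℝ 1 ψ) (ξ x : E)
    {e : E} (he : ‖e‖ ≤ 1) {t : ℝ} (ht : 0 ≤ t) :
    (t * ⟪e, ξ⟫ + (ψ (x + t • e) - ψ x)) ^ 2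
      ≤ t * ∫ σ in Ioc 0 t, ‖ξ + gradient ψ (x + σ • e)‖ ^ 2 := by
  set g : ℝ → ℝ := fun σ => ⟪e, ξ + gradient ψ (x + σ • e)⟫
  have hg : Continuous g := continuous_const.inner
    (continuous_const.add (hψ.continuous_gradient.comp (by fun_prop)))
  have hftc : ∫ σ in Ioc 0 t, g σ = t * ⟪e, ξ⟫ + (ψ (x + t • e) - ψ x) := by
    have hderiv : ∀ σ, HasDerivAt (fun σ : ℝ => σ * ⟪e, ξ⟫ + ψ (x + σ • e)) (g σ) σ := by
      intro σ
      exact (((hasDerivAt_id σ).mul_const ⟪e, ξ⟫).add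
        (hasDerivAt_comp_add_smul (hψ.differentiable one_ne_zero) x e σ)).congr_deriv
        (by simp [g, inner_add_right, real_inner_comm])
    rw [← intervalIntegral.integral_of_le ht,
      intervalIntegral.integral_eq_sub_of_hasDerivAt (fun σ _ => hderiv σ)
        (hg.intervalIntegrable _ _)]
    simp only [zero_smul, add_zero, zero_mul, zero_add]
    ring
  have hg_le : ∀ σ, g σ ^ 2 ≤ ‖ξ + gradient ψ (x + σ • e)‖ ^ 2 := fun σ => by
    refine sq_le_sq.mpr ((abs_real_inner_le_norm _ _).trans ?_)
    rw [abs_norm]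
    exact mul_le_of_le_one_left (norm_nonneg _) he
  have hG : Continuous fun σ : ℝ => ‖ξ + gradient ψ (x + σ • e)‖ ^ 2 :=
    ((continuous_const.add (hψ.continuous_gradient.comp (by fun_prop))).norm).pow 2
  calc (t * ⟪e, ξ⟫ + (ψ (x + t • e) - ψ x)) ^ 2 = (∫ σ in Ioc 0 t, g σ) ^ 2 := by rw [hftc]
    _ ≤ volume.real (Ioc 0 t) * ∫ σ in Ioc 0 t, g σ ^ 2 :=
      sq_setIntegral_le_measureReal_mul_setIntegral_sq (measure_Ioc_lt_top (μ := volume)).ne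
        hg.integrableOn_Ioc (hg.pow 2).integrableOn_Ioc
    _ ≤ t * ∫ σ in Ioc 0 t, ‖ξ + gradient ψ (x + σ • e)‖ ^ 2 := by
      rw [Real.volume_real_Ioc_of_le ht, sub_zero]
      exact mul_le_mul_of_nonneg_left (setIntegral_mono_on (hg.pow 2).integrableOn_Ioc
        hG.integrableOn_Ioc measurableSet_Ioc fun σ _ => hg_le σ) ht

end Segment

theorem Continuous.integrableOn_ball {X : Type*} [MetricSpace X] [ProperSpace X]
    [MeasurableSpace X] [OpensMeasurableSpace X] {μ : Measure X} [IsFiniteMeasureOnCompacts μ]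
    {f : X → ℝ} (hf : Continuous f) (x : X) (r : ℝ) : IntegrableOn f (ball x r) μ :=
  (hf.continuousOn.integrableOn_compact (isCompact_closedBall x r)).mono_set
    ball_subset_closedBall

section Ball

variable {E : Type*} [NormedAddCommGroup E] [InnerProductSpace ℝ E] [FiniteDimensional ℝ E]
  [MeasurableSpace E] [BorelSpace E] (μ : Measure E) [μ.IsAddHaarMeasure]

theorem setIntegral_ball_sq_add_sub_le {ψ : E → ℝ} (hψ : ContDiff ℝ 1 ψ) (ξ : E) {e : E}
    (he : ‖e‖ ≤ 1) {s t r : ℝ} (ht : 0 ≤ t) (h : s + t ≤ r) :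
    ∫ x in ball 0 s, (t * ⟪e, ξ⟫ + (ψ (x + t • e) - ψ x)) ^ 2 ∂μ
      ≤ t ^ 2 * ∫ x in ball 0 r, ‖ξ + gradient ψ x‖ ^ 2 ∂μ := by
  set K : E → ℝ := fun y => ‖ξ + gradient ψ y‖ ^ 2
  have hK : Continuous K := (continuous_const.add hψ.continuous_gradient).norm.pow 2
  have hKline : Integrable (Function.uncurry fun x σ => K (x + σ • e))
      ((μ.restrict (ball 0 s)).prod (volume.restrict (Ioc 0 t))) := by
    rw [Measure.prod_restrict]
    exact ((hK.comp (by fun_prop)).continuousOn.integrableOn_compact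
      ((isCompact_closedBall 0 s).prod isCompact_Icc)).mono_set
      (prod_mono ball_subset_closedBall Ioc_subset_Icc_self)
  have hsegment : ∀ σ ∈ Ioc 0 t, ∫ x in ball 0 s, K (x + σ • e) ∂μ ≤ ∫ x in ball 0 r, K x ∂μ := by
    intro σ hσ
    refine setIntegral_ball_comp_add_right_le μ (fun y => sq_nonneg _) (hK.integrableOn_ball _ _) ?_
    rw [norm_smul, Real.norm_of_nonneg hσ.1.le]
    nlinarith [hσ.2, norm_nonneg e]
  have hΔ : Continuous fun x => (t * ⟪e, ξ⟫ + (ψ (x + t • e) - ψ x)) ^ 2 :=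
    (continuous_const.add ((hψ.continuous.comp (by fun_prop)).sub hψ.continuous)).pow 2
  calc ∫ x in ball 0 s, (t * ⟪e, ξ⟫ + (ψ (x + t • e) - ψ x)) ^ 2 ∂μ
      ≤ ∫ x in ball 0 s, t * (∫ σ in Ioc 0 t, K (x + σ • e)) ∂μ :=
        setIntegral_mono_on (hΔ.integrableOn_ball _ _) (hKline.integral_prod_left.const_mul t)
          measurableSet_ball fun x _ => sq_add_sub_le_mul_setIntegral_norm_sq hψ ξ x he ht
    _ = t * ∫ σ in Ioc 0 t, ∫ x in ball 0 s, K (x + σ • e) ∂μ := by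
        rw [integral_const_mul, integral_integral_swap hKline]
    _ ≤ t * ∫ _ in Ioc 0 t, ∫ x in ball 0 r, K x ∂μ :=
        mul_le_mul_of_nonneg_left (setIntegral_mono_on hKline.integral_prod_right
          (integrableOn_const measure_Ioc_lt_top.ne) measurableSet_Ioc hsegment) ht
    _ = t ^ 2 * ∫ x in ball 0 r, K x ∂μ := by
        rw [setIntegral_const, Real.volume_real_Ioc_of_le ht, sub_zero, smul_eq_mul]
        ring

theorem sq_mul_measureReal_sub_le_setIntegral_sq {ψ : E → ℝ} (hψ : Continuous ψ) (c : ℝ)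
    {a : ℝ} (ha : 0 ≤ a) {h : E} {s r : ℝ} (hs : s + ‖h‖ ≤ r) :
    a ^ 2 * μ.real (ball 0 s) - 4 * a * ∫ x in ball 0 r, |ψ x - c| ∂μ
      ≤ ∫ x in ball 0 s, (a + (ψ (x + h) - ψ x)) ^ 2 ∂μ := by
  have hψc : Continuous fun x => ψ x - c := hψ.sub continuous_const
  have hshift : |∫ x in ball 0 s, (ψ (x + h) - c) ∂μ| ≤ ∫ x in ball 0 r, |ψ x - c| ∂μ :=
    abs_setIntegral_ball_comp_add_right_le μ (hψc.integrableOn_ball _ _) hs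
  have hfix : |∫ x in ball 0 s, (ψ x - c) ∂μ| ≤ ∫ x in ball 0 r, |ψ x - c| ∂μ := by
    simpa using abs_setIntegral_ball_comp_add_right_le μ (hψc.integrableOn_ball _ _)
      (a := 0) (by rw [norm_zero, add_zero]; linarith [norm_nonneg h])
  have hint : ∀ {f : E → ℝ}, Continuous f → IntegrableOn f (ball 0 s) μ :=
    fun hf => hf.integrableOn_ball _ _
  have hψh : Continuous fun x => ψ (x + h) - c := hψc.comp (continuous_add_const h)
  have hlin : ∫ x in ball 0 s, (a ^ 2 + 2 * a * ((ψ (x + h) - c) - (ψ x - c))) ∂μ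
      = a ^ 2 * μ.real (ball 0 s)
        + 2 * a * (∫ x in ball 0 s, (ψ (x + h) - c) ∂μ - ∫ x in ball 0 s, (ψ x - c) ∂μ) := by
    rw [integral_add (hint continuous_const)
        ((hint (f := fun x => ψ (x + h) - c - (ψ x - c)) (hψh.sub hψc)).const_mul _),
      integral_const_mul, integral_sub (hint hψh) (hint hψc), setIntegral_const,
      smul_eq_mul, mul_comm (μ.real _)]
  have hpoint : ∫ x in ball 0 s, (a ^ 2 + 2 * a * ((ψ (x + h) - c) - (ψ x - c))) ∂μ
      ≤ ∫ x in ball 0 s, (a + (ψ (x + h) - ψ x)) ^ 2 ∂μ :=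
    setIntegral_mono_on (hint (continuous_const.add (continuous_const.mul (hψh.sub hψc))))
      (hint ((continuous_const.add ((hψ.comp (continuous_add_const h)).sub hψ)).pow 2))
      measurableSet_ball
      fun x _ => by nlinarith [sq_nonneg (ψ (x + h) - ψ x)]
  rw [hlin] at hpoint
  nlinarith [abs_le.mp hshift, abs_le.mp hfix]

theorem norm_sq_mul_measureReal_sub_le_setIntegral {ψ : E → ℝ} (hψ : ContDiff ℝ 1 ψ) (ξ : E)
    (c : ℝ) {t r : ℝ} (ht : 0 < t) :
    ‖ξ‖ ^ 2 * μ.real (ball 0 (r - t)) - 4 * ‖ξ‖ / t * ∫ x in ball 0 r, |ψ x - c| ∂μ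
      ≤ ∫ x in ball 0 r, ‖ξ + gradient ψ x‖ ^ 2 ∂μ := by
  set e : E := ‖ξ‖⁻¹ • ξ
  have he : ‖e‖ ≤ 1 := by
    rw [norm_smul, norm_inv, norm_norm]
    exact inv_mul_le_one_of_le₀ le_rfl (norm_nonneg ξ)
  have hinner : ⟪e, ξ⟫ = ‖ξ‖ := by
    rw [real_inner_smul_left, real_inner_self_eq_norm_sq]
    rcases (norm_nonneg ξ).eq_or_lt with h | h
    · simp [← h]
    · field_simp
  have hte : r - t + ‖t • e‖ ≤ r := by
    rw [norm_smul, Real.norm_of_nonneg ht.le]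
    nlinarith
  have upper := setIntegral_ball_sq_add_sub_le μ hψ ξ he ht.le (s := r - t) (r := r)
    (sub_add_cancel r t).le
  have lower := sq_mul_measureReal_sub_le_setIntegral_sq μ hψ.continuous c
    (a := t * ‖ξ‖) (by positivity) hte
  rw [hinner] at upper
  refine le_of_mul_le_mul_left ?_ (by positivity : 0 < t ^ 2)
  calc t ^ 2 * (‖ξ‖ ^ 2 * μ.real (ball 0 (r - t)) - 4 * ‖ξ‖ / t * ∫ x in ball 0 r, |ψ x - c| ∂μ)
      = (t * ‖ξ‖) ^ 2 * μ.real (ball 0 (r - t))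
        - 4 * (t * ‖ξ‖) * ∫ x in ball 0 r, |ψ x - c| ∂μ := by
        field_simp
    _ ≤ _ := lower.trans upper

theorem one_sub_mul_measureReal_ball_le {t r : ℝ} (ht : 0 ≤ t) (htr : t < r) :
    (1 - finrank ℝ E * (t / r)) * μ.real (ball (0 : E) r) ≤ μ.real (ball (0 : E) (r - t)) := by
  have hr : 0 < r := ht.trans_lt htr
  have hball : μ.real (ball (0 : E) (r - t)) = ((r - t) / r) ^ finrank ℝ E * μ.real (ball 0 r) := by
    have := μ.addHaar_ball_mul_of_pos (0 : E) (div_pos (sub_pos.2 htr) hr) r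
    rw [div_mul_cancel₀ _ hr.ne'] at this
    rw [measureReal_def, this, ENNReal.toReal_mul, ENNReal.toReal_ofReal (by positivity),
      measureReal_def]
  rw [hball]
  refine mul_le_mul_of_nonneg_right ?_ measureReal_nonneg
  have hbernoulli := one_add_mul_le_pow (a := -(t / r))
    (by linarith [(div_le_one hr).mpr htr.le]) (finrank ℝ E)
  calc 1 - finrank ℝ E * (t / r) = 1 + finrank ℝ E * (-(t / r)) := by ring
    _ ≤ (1 + -(t / r)) ^ finrank ℝ E := hbernoulli
    _ = ((r - t) / r) ^ finrank ℝ E := by congr 1; field_simp; ring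

theorem one_sub_mul_norm_sq_sub_le_setAverage {ψ : E → ℝ} (hψ : ContDiff ℝ 1 ψ) (ξ : E) (c : ℝ)
    {r u : ℝ} (hr : 0 < r) (hu : 0 < u) (hu1 : u < 1) :
    (1 - finrank ℝ E * u) * ‖ξ‖ ^ 2 - 4 * ‖ξ‖ / (r * u) * ⨍ x in ball 0 r, |ψ x - c| ∂μ
      ≤ ⨍ x in ball 0 r, ‖ξ + gradient ψ x‖ ^ 2 ∂μ := by
  have hW : 0 < μ.real (ball (0 : E) r) :=
    ENNReal.toReal_pos (measure_ball_pos μ 0 hr).ne' measure_ball_lt_top.ne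
  have hvol := one_sub_mul_measureReal_ball_le μ (t := r * u) (r := r) (by positivity)
    (by nlinarith)
  rw [mul_div_cancel_left₀ u hr.ne'] at hvol
  have hcore := norm_sq_mul_measureReal_sub_le_setIntegral μ hψ ξ c (t := r * u) (r := r)
    (by positivity)
  rw [setAverage_eq, setAverage_eq, smul_eq_mul, smul_eq_mul]
  calc (1 - finrank ℝ E * u) * ‖ξ‖ ^ 2
        - 4 * ‖ξ‖ / (r * u) * ((μ.real (ball 0 r))⁻¹ * ∫ x in ball 0 r, |ψ x - c| ∂μ)
      = (μ.real (ball 0 r))⁻¹ * (‖ξ‖ ^ 2 * ((1 - finrank ℝ E * u) * μ.real (ball 0 r))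
        - 4 * ‖ξ‖ / (r * u) * ∫ x in ball 0 r, |ψ x - c| ∂μ) := by
        field_simp
    _ ≤ (μ.real (ball 0 r))⁻¹ * (‖ξ‖ ^ 2 * μ.real (ball 0 (r - r * u))
        - 4 * ‖ξ‖ / (r * u) * ∫ x in ball 0 r, |ψ x - c| ∂μ) := by gcongr
    _ ≤ _ := by gcongr

end Ball

theorem sq_setAverage_abs_sum_mul_sub_le {X : Type*} [MetricSpace X] [ProperSpace X]
    [MeasurableSpace X] [OpensMeasurableSpace X] {μ : Measure X} [IsFiniteMeasureOnCompacts μ]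
    {ι : Type*} [Fintype ι] {φ : ι → X → ℝ} (hφ : ∀ i, Continuous (φ i))
    (ξ : EuclideanSpace ℝ ι) (c : ι → ℝ) (x₀ : X) (r : ℝ) :
    (⨍ x in ball x₀ r, |∑ i, ξ i * φ i x - ∑ i, ξ i * c i| ∂μ) ^ 2
      ≤ ‖ξ‖ ^ 2 * ⨍ x in ball x₀ r, ∑ i, (φ i x - c i) ^ 2 ∂μ := by
  have hf : Continuous fun x => ∑ i, ξ i * φ i x - ∑ i, ξ i * c i := by fun_prop
  have hg : Continuous fun x => ∑ i, (φ i x - c i) ^ 2 := by fun_prop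
  have hpoint : ∀ x, |∑ i, ξ i * φ i x - ∑ i, ξ i * c i| ^ 2
      ≤ ‖ξ‖ ^ 2 * ∑ i, (φ i x - c i) ^ 2 := by
    intro x
    rw [sq_abs, ← Finset.sum_sub_distrib, EuclideanSpace.real_norm_sq_eq]
    simp_rw [← mul_sub]
    exact Finset.sum_mul_sq_le_sq_mul_sq _ _ _
  calc (⨍ x in ball x₀ r, |∑ i, ξ i * φ i x - ∑ i, ξ i * c i| ∂μ) ^ 2
      ≤ ⨍ x in ball x₀ r, |∑ i, ξ i * φ i x - ∑ i, ξ i * c i| ^ 2 ∂μ :=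
        sq_setAverage_le_setAverage_sq measure_ball_lt_top.ne (hf.abs.integrableOn_ball _ _)
          ((hf.abs.pow 2).integrableOn_ball _ _)
    _ ≤ ‖ξ‖ ^ 2 * ⨍ x in ball x₀ r, ∑ i, (φ i x - c i) ^ 2 ∂μ := by
        rw [setAverage_eq, setAverage_eq, smul_eq_mul, smul_eq_mul, mul_left_comm (‖ξ‖ ^ 2),
          ← integral_const_mul (‖ξ‖ ^ 2)]
        refine mul_le_mul_of_nonneg_left (setIntegral_mono_on
          ((hf.abs.pow 2).integrableOn_ball (μ := μ) _ _)
          ((continuous_const.mul hg).integrableOn_ball _ _) measurableSet_ball fun x _ => hpoint x)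
          (inv_nonneg.mpr measureReal_nonneg)

theorem one_sub_mul_rpow_mul_le_of_forall {n a A δ : ℝ} (hδ0 : 0 ≤ δ) (hδ1 : δ < 1)
    (h : ∀ u, 0 < u → u < 1 → (1 - n * u - 4 * √δ / u) * a ≤ A) :
    (1 - (n + 4) * δ ^ ((1 : ℝ) / 4)) * a ≤ A := by
  rcases hδ0.eq_or_lt with rfl | hδ
  · simp only [Real.sqrt_zero, zero_div, mul_zero, sub_zero,
      Real.zero_rpow (by norm_num : (1 : ℝ) / 4 ≠ 0), one_mul] at h ⊢
    have hcont : Continuous fun u : ℝ => (1 - n * u) * a := by fun_prop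
    have hlim : Filter.Tendsto (fun u : ℝ => (1 - n * u) * a) (nhdsWithin 0 (Ioi 0)) (nhds a) := by
      simpa using (hcont.tendsto 0).mono_left nhdsWithin_le_nhds
    exact le_of_tendsto hlim (Filter.eventually_of_mem (Ioo_mem_nhdsGT one_pos)
      fun u hu => h u hu.1 hu.2)
  · set u := δ ^ ((1 : ℝ) / 4)
    have hu : 0 < u := Real.rpow_pos_of_pos hδ _
    have hu1 : u < 1 := Real.rpow_lt_one hδ0 hδ1 (by norm_num)
    have hsqrt : √δ = u ^ 2 := by
      rw [Real.sqrt_eq_rpow, ← Real.rpow_natCast, ← Real.rpow_mul hδ0]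
      norm_num
    convert h u hu hu1 using 2
    rw [hsqrt]
    field_simp
    ring

theorem stmt17_general (d : ℕ) :
    ∃ δ₀ C : ℝ, 0 < δ₀ ∧ 0 < C ∧
    ∀ (r : ℝ), 1 ≤ r →
    ∀ (φ : Fin d → EuclideanSpace ℝ (Fin d) → ℝ),
      (∀ i, ContDiff ℝ 1 (φ i)) →
    ∀ δ : ℝ, 0 ≤ δ → δ ≤ δ₀ →
      (∀ s : ℝ, 0 < s → s ≤ r →
        (1 / s ^ 2) * ⨍ x in ball (0 : EuclideanSpace ℝ (Fin d)) s,
          ∑ i, (φ i x - ⨍ y in ball (0 : EuclideanSpace ℝ (Fin d)) s, φ i y) ^ 2 ≤ δ) →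
    ∀ ξ : EuclideanSpace ℝ (Fin d),
      (1 - C * δ ^ ((1 : ℝ) / 4)) * ‖ξ‖ ^ 2 ≤
        ⨍ x in ball (0 : EuclideanSpace ℝ (Fin d)) r,
          ‖ξ + gradient (fun y => ∑ i, ξ i * φ i y) x‖ ^ 2 := by
  refine ⟨1 / 2, d + 4, by norm_num, by positivity, ?_⟩
  intro r hr φ hφ δ hδ0 hδ hosc ξ
  have hr0 : 0 < r := by linarith
  set c : Fin d → ℝ := fun i => ⨍ y in ball 0 r, φ i y
  have hmean : ⨍ x in ball 0 r, |∑ i, ξ i * φ i x - ∑ i, ξ i * c i| ≤ ‖ξ‖ * r * √δ := by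
    refine le_of_pow_le_pow_left₀ two_ne_zero (by positivity) ?_
    calc _ ≤ ‖ξ‖ ^ 2 * ⨍ x in ball 0 r, ∑ i, (φ i x - c i) ^ 2 :=
          sq_setAverage_abs_sum_mul_sub_le (fun i => (hφ i).continuous) ξ c 0 r
      _ ≤ ‖ξ‖ ^ 2 * (r ^ 2 * δ) := by
          have := hosc r hr0 le_rfl
          rw [one_div, inv_mul_le_iff₀ (by positivity)] at this
          gcongr
      _ = (‖ξ‖ * r * √δ) ^ 2 := by rw [mul_pow, Real.sq_sqrt hδ0]; ring
  refine one_sub_mul_rpow_mul_le_of_forall hδ0 (by linarith) fun u hu hu1 => ?_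
  have hψ : ContDiff ℝ 1 fun y => ∑ i, ξ i * φ i y :=
    ContDiff.sum fun i _ => contDiff_const.mul (hφ i)
  have hbound := one_sub_mul_norm_sq_sub_le_setAverage volume hψ ξ (∑ i, ξ i * c i) hr0 hu hu1
  rw [finrank_euclideanSpace_fin] at hbound
  refine le_trans ?_ hbound
  calc (1 - d * u - 4 * √δ / u) * ‖ξ‖ ^ 2
      = (1 - d * u) * ‖ξ‖ ^ 2 - 4 * ‖ξ‖ / (r * u) * (‖ξ‖ * r * √δ) := by field_simp
    _ ≤ _ := by gcongr

theorem stmt17 (d : ℕ) (hd : 1 ≤ d) :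
    ∃ δ₀ C : ℝ, 0 < δ₀ ∧ 0 < C ∧
    ∀ (r : ℝ), 1 ≤ r →
    ∀ (φ : Fin d → EuclideanSpace ℝ (Fin d) → ℝ),
      (∀ i, ContDiff ℝ 1 (φ i)) →
    ∀ δ : ℝ, 0 ≤ δ → δ ≤ δ₀ →
      (∀ s : ℝ, 0 < s → s ≤ r →
        (1 / s ^ 2) * ⨍ x in ball (0 : EuclideanSpace ℝ (Fin d)) s,
          ∑ i, (φ i x - ⨍ y in ball (0 : EuclideanSpace ℝ (Fin d)) s, φ i y) ^ 2 ≤ δ) →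
    ∀ ξ : EuclideanSpace ℝ (Fin d),
      (1 - C * δ ^ ((1 : ℝ) / 4)) * ‖ξ‖ ^ 2 ≤
        ⨍ x in ball (0 : EuclideanSpace ℝ (Fin d)) r,
          ‖ξ + gradient (fun y => ∑ i, ξ i * φ i y) x‖ ^ 2 :=
  stmt17_general d
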